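/- If C is a balanced strict monoidal category, then the canonical functor C → Aff(C) that is the identity on objects and sends each morphism f of C to the corresponding morphism in Aff(C) is faithful. -/

import Mathlib

open CategoryTheory

set_option linter.unusedVariables false

universe v u v₂ u₂ v₃ u₃ w

/-- A strict monoidal category: the objects form a monoid, and the tensor product of
morphisms is strictly compatible with this monoid structure (associativity and unitality of
the tensor product hold as equalities of objects, witnessed by `eqToHom`s). -/
class StrictMonoidal (C : Type u) [Category.{v} C] extends Monoid C where
  tHom : ∀ {X₁ Y₁ X₂ Y₂ : C}, (X₁ ⟶ Y₁) → (X₂ ⟶ Y₂) → ((X₁ * X₂ : C) ⟶ (Y₁ * Y₂ : C))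
  tHom_id : ∀ X Y : C, tHom (𝟙 X) (𝟙 Y) = 𝟙 (X * Y)
  tHom_comp : ∀ {X₁ Y₁ Z₁ X₂ Y₂ Z₂ : C} (f₁ : X₁ ⟶ Y₁) (g₁ : Y₁ ⟶ Z₁) (f₂ : X₂ ⟶ Y₂)
      (g₂ : Y₂ ⟶ Z₂), tHom (f₁ ≫ g₁) (f₂ ≫ g₂) = tHom f₁ f₂ ≫ tHom g₁ g₂
  tHom_assoc : ∀ {X₁ Y₁ X₂ Y₂ X₃ Y₃ : C} (f₁ : X₁ ⟶ Y₁) (f₂ : X₂ ⟶ Y₂) (f₃ : X₃ ⟶ Y₃),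
      tHom (tHom f₁ f₂) f₃ =
        eqToHom (mul_assoc X₁ X₂ X₃) ≫ tHom f₁ (tHom f₂ f₃) ≫ eqToHom (mul_assoc Y₁ Y₂ Y₃).symm
  tHom_one_left : ∀ {X Y : C} (f : X ⟶ Y),
      tHom (𝟙 (1 : C)) f = eqToHom (one_mul X) ≫ f ≫ eqToHom (one_mul Y).symm
  tHom_one_right : ∀ {X Y : C} (f : X ⟶ Y),
      tHom f (𝟙 (1 : C)) = eqToHom (mul_one X) ≫ f ≫ eqToHom (mul_one Y).symm

open StrictMonoidal

/-- A braiding on a strict monoidal category, making it a braided strict monoidal category. -/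
class StrictBraided (C : Type u) [Category.{v} C] [StrictMonoidal C] where
  braid : ∀ X Y : C, (X * Y : C) ≅ (Y * X : C)
  braid_naturality : ∀ {X₁ Y₁ X₂ Y₂ : C} (f : X₁ ⟶ Y₁) (g : X₂ ⟶ Y₂),
      tHom f g ≫ (braid Y₁ Y₂).hom = (braid X₁ X₂).hom ≫ tHom g f
  braid_mul_right : ∀ X Y Z : C,
      (braid X (Y * Z)).hom =
        eqToHom (mul_assoc X Y Z).symm ≫ tHom (braid X Y).hom (𝟙 Z) ≫
          eqToHom (mul_assoc Y X Z) ≫ tHom (𝟙 Y) (braid X Z).hom ≫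
          eqToHom (mul_assoc Y Z X).symm
  braid_mul_left : ∀ X Y Z : C,
      (braid (X * Y) Z).hom =
        eqToHom (mul_assoc X Y Z) ≫ tHom (𝟙 X) (braid Y Z).hom ≫
          eqToHom (mul_assoc X Z Y).symm ≫ tHom (braid X Z).hom (𝟙 Y) ≫
          eqToHom (mul_assoc Z X Y)

open StrictBraided

/-- A twist on a braided strict monoidal category, making it a balanced strict monoidal
category. -/
class StrictBalanced (C : Type u) [Category.{v} C] [StrictMonoidal C] [StrictBraided C] where
  twistIso : ∀ X : C, X ≅ X
  twist_natural : ∀ {X Y : C} (f : X ⟶ Y), f ≫ (twistIso Y).hom = (twistIso X).hom ≫ f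
  twist_one : twistIso (1 : C) = Iso.refl (1 : C)
  twist_mul : ∀ X Y : C,
      (twistIso (X * Y)).hom =
        tHom (twistIso X).hom (twistIso Y).hom ≫ (braid X Y).hom ≫ (braid Y X).hom

open StrictBalanced
/-! ### The affinization of a strict monoidal category -/

/-- The type of objects of the affinization `Aff C`: the same objects as `C`. -/
def Aff (C : Type u) : Type u := C

/-- The tautological map from objects of `C` to objects of `Aff C`. -/
def toAff {C : Type u} : C → Aff C := id

/-- The tautological map from objects of `Aff C` to objects of `C`. -/
def ofAff {C : Type u} : Aff C → C := id

/-- Formal composites of morphisms of `C` and the adjoined coils `ξ_{X,Y} : X ⊗ Y ⟶ Y ⊗ X`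
and their formal inverses. -/
inductive AffHom (C : Type u) [Category.{v} C] [StrictMonoidal C] : C → C → Type (max u v)
  | of : ∀ {X Y : C}, (X ⟶ Y) → AffHom C X Y
  | coil : ∀ X Y : C, AffHom C (X * Y) (Y * X)
  | coilInv : ∀ X Y : C, AffHom C (Y * X) (X * Y)
  | comp : ∀ {X Y Z : C}, AffHom C X Y → AffHom C Y Z → AffHom C X Z

/-- The defining relations of the affinization: category axioms, invertibility of the coils,
the coil relation `ξ_{X,Y⊗Z} = ξ_{Z⊗X,Y} ∘ ξ_{X⊗Y,Z}`, and the sliding relation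
`ξ_{X₂,Y₂} ∘ (g ⊗ f) = (f ⊗ g) ∘ ξ_{X₁,Y₁}`. -/
inductive AffRel (C : Type u) [Category.{v} C] [StrictMonoidal C] :
    ∀ {X Y : C}, AffHom C X Y → AffHom C X Y → Prop
  | refl {X Y : C} (f : AffHom C X Y) : AffRel C f f
  | symm {X Y : C} {f g : AffHom C X Y} : AffRel C f g → AffRel C g f
  | trans {X Y : C} {f g h : AffHom C X Y} : AffRel C f g → AffRel C g h → AffRel C f h
  | comp_congr {X Y Z : C} {f f' : AffHom C X Y} {g g' : AffHom C Y Z} :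
      AffRel C f f' → AffRel C g g' → AffRel C (f.comp g) (f'.comp g')
  | of_comp {X Y Z : C} (f : X ⟶ Y) (g : Y ⟶ Z) :
      AffRel C (AffHom.of (f ≫ g)) ((AffHom.of f).comp (AffHom.of g))
  | id_comp {X Y : C} (f : AffHom C X Y) : AffRel C ((AffHom.of (𝟙 X)).comp f) f
  | comp_id {X Y : C} (f : AffHom C X Y) : AffRel C (f.comp (AffHom.of (𝟙 Y))) f
  | assoc {W X Y Z : C} (f : AffHom C W X) (g : AffHom C X Y) (h : AffHom C Y Z) :
      AffRel C ((f.comp g).comp h) (f.comp (g.comp h))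
  | coil_coilInv (X Y : C) :
      AffRel C ((AffHom.coil X Y).comp (AffHom.coilInv X Y)) (AffHom.of (𝟙 (X * Y)))
  | coilInv_coil (X Y : C) :
      AffRel C ((AffHom.coilInv X Y).comp (AffHom.coil X Y)) (AffHom.of (𝟙 (Y * X)))
  | coil_mul (X Y Z : C) :
      AffRel C (AffHom.coil X (Y * Z))
        ((AffHom.of (eqToHom (mul_assoc X Y Z).symm)).comp ((AffHom.coil (X * Y) Z).comp
          ((AffHom.of (eqToHom (mul_assoc Z X Y).symm)).comp ((AffHom.coil (Z * X) Y).comp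
            (AffHom.of (eqToHom (mul_assoc Y Z X).symm))))))
  | slide {X₁ X₂ Y₁ Y₂ : C} (f : Y₁ ⟶ Y₂) (g : X₁ ⟶ X₂) :
      AffRel C ((AffHom.of (tHom g f)).comp (AffHom.coil X₂ Y₂))
        ((AffHom.coil X₁ Y₁).comp (AffHom.of (tHom f g)))

instance Aff.category (C : Type u) [Category.{v} C] [StrictMonoidal C] :
    Category.{max u v} (Aff C) where
  Hom X Y := Quot (@AffRel C _ _ (ofAff X) (ofAff Y))
  id X := Quot.mk _ (AffHom.of (𝟙 (ofAff X)))
  comp {X Y Z} := Quot.map₂ AffHom.comp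
      (fun f _ _ h => AffRel.comp_congr (AffRel.refl f) h)
      (fun _ _ g h => AffRel.comp_congr h (AffRel.refl g))
  id_comp f := Quot.inductionOn f fun f => Quot.sound (AffRel.id_comp f)
  comp_id f := Quot.inductionOn f fun f => Quot.sound (AffRel.comp_id f)
  assoc f g h := Quot.inductionOn f fun f => Quot.inductionOn g fun g =>
    Quot.inductionOn h fun h => Quot.sound (AffRel.assoc f g h)

/-- The canonical functor from `C` to its affinization. It is the identity on objects. -/
def affIncl (C : Type u) [Category.{v} C] [StrictMonoidal C] : C ⥤ Aff C where
  obj := toAff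
  map f := Quot.mk _ (AffHom.of f)
  map_id _ := rfl
  map_comp f g := Quot.sound (AffRel.of_comp f g)

/-- The coil `ξ_{X,Y} : X ⊗ Y ⟶ Y ⊗ X` in the affinization. -/
def affCoil (C : Type u) [Category.{v} C] [StrictMonoidal C] (X Y : C) :
    toAff (X * Y) ⟶ toAff (Y * X) := Quot.mk _ (AffHom.coil X Y)

/-- The inverse coil `ξ_{X,Y}⁻¹ : Y ⊗ X ⟶ X ⊗ Y` in the affinization. -/
def affCoilInv (C : Type u) [Category.{v} C] [StrictMonoidal C] (X Y : C) :
    toAff (Y * X) ⟶ toAff (X * Y) := Quot.mk _ (AffHom.coilInv X Y)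

theorem affCoil_hom_inv (C : Type u) [Category.{v} C] [StrictMonoidal C] (X Y : C) :
    affCoil C X Y ≫ affCoilInv C X Y = 𝟙 (toAff (X * Y)) :=
  Quot.sound (AffRel.coil_coilInv X Y)

theorem affCoil_inv_hom (C : Type u) [Category.{v} C] [StrictMonoidal C] (X Y : C) :
    affCoilInv C X Y ≫ affCoil C X Y = 𝟙 (toAff (Y * X)) :=
  Quot.sound (AffRel.coilInv_coil X Y)

/-!
In a balanced category the assignment `ξ_{X,Y} ↦ β_{X,Y} ∘ (1_X ⊗ θ_Y)` respects the defining
relations of `Aff C`: sliding is the naturality of `β` and `θ`, and the coil relation reduces, via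
the hexagon identities, to `θ_{Y⊗Z} = β_{Z,Y} ∘ β_{Y,Z} ∘ (θ_Y ⊗ θ_Z)`. This yields a functor
`Aff C ⥤ C` that is a left inverse of `affIncl C`, which is therefore faithful.
-/

namespace StrictMonoidal

variable {C : Type u} [Category.{v} C] [StrictMonoidal C]

lemma tHom_id_comp (A : C) {X Y Z : C} (u : X ⟶ Y) (v : Y ⟶ Z) :
    tHom (𝟙 A) (u ≫ v) = tHom (𝟙 A) u ≫ tHom (𝟙 A) v := by
  rw [← tHom_comp, Category.comp_id]

lemma tHom_whisker_exchange {X₁ Y₁ X₂ Y₂ : C} (f : X₁ ⟶ Y₁) (g : X₂ ⟶ Y₂) :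
    tHom f (𝟙 X₂) ≫ tHom (𝟙 Y₁) g = tHom (𝟙 X₁) g ≫ tHom f (𝟙 Y₂) := by
  rw [← tHom_comp, ← tHom_comp, Category.comp_id, Category.id_comp, Category.comp_id,
    Category.id_comp]

lemma tHom_id_mul (A B : C) {X Y : C} (f : X ⟶ Y) :
    tHom (𝟙 (A * B)) f =
      eqToHom (mul_assoc A B X) ≫ tHom (𝟙 A) (tHom (𝟙 B) f) ≫
        eqToHom (mul_assoc A B Y).symm := by
  rw [← tHom_id A B, tHom_assoc]

lemma eqToHom_mul_assoc_comp_tHom_id_tHom_id (A B : C) {X Y : C} (f : X ⟶ Y) :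
    eqToHom (mul_assoc A B X) ≫ tHom (𝟙 A) (tHom (𝟙 B) f) =
      tHom (𝟙 (A * B)) f ≫ eqToHom (mul_assoc A B Y) := by
  simp [tHom_id_mul]

lemma eqToHom_mul_assoc_symm_comp_tHom_id_mul (A B : C) {X Y : C} (f : X ⟶ Y) :
    eqToHom (mul_assoc A B X).symm ≫ tHom (𝟙 (A * B)) f =
      tHom (𝟙 A) (tHom (𝟙 B) f) ≫ eqToHom (mul_assoc A B Y).symm := by
  simp [tHom_id_mul]

def whiskerLeftIso (A : C) {X Y : C} (e : X ≅ Y) : (A * X : C) ≅ (A * Y : C) where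
  hom := tHom (𝟙 A) e.hom
  inv := tHom (𝟙 A) e.inv
  hom_inv_id := by rw [← tHom_id_comp, e.hom_inv_id, tHom_id]
  inv_hom_id := by rw [← tHom_id_comp, e.inv_hom_id, tHom_id]

end StrictMonoidal

section Balanced

variable {C : Type u} [Category.{v} C] [StrictMonoidal C] [StrictBraided C] [StrictBalanced C]

def coilImage (X Y : C) : (X * Y : C) ≅ (Y * X : C) :=
  whiskerLeftIso X (twistIso Y) ≪≫ braid X Y

lemma coilImage_hom (X Y : C) :
    (coilImage X Y).hom = tHom (𝟙 X) (twistIso Y).hom ≫ (braid X Y).hom := rfl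

lemma coilImage_slide {X₁ X₂ Y₁ Y₂ : C} (f : Y₁ ⟶ Y₂) (g : X₁ ⟶ X₂) :
    tHom g f ≫ (coilImage X₂ Y₂).hom = (coilImage X₁ Y₁).hom ≫ tHom f g := by
  have twist_slide : tHom g f ≫ tHom (𝟙 X₂) (twistIso Y₂).hom =
      tHom (𝟙 X₁) (twistIso Y₁).hom ≫ tHom g f := by
    rw [← tHom_comp, ← tHom_comp, twist_natural f, Category.comp_id, Category.id_comp]
  rw [coilImage_hom, coilImage_hom, reassoc_of% twist_slide, braid_naturality g f,
    Category.assoc]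

lemma coilImage_mul_right_hom (X Y Z : C) :
    (coilImage X (Y * Z)).hom =
      tHom (𝟙 X) (tHom (twistIso Y).hom (twistIso Z).hom) ≫ tHom (𝟙 X) (braid Y Z).hom ≫
        eqToHom (mul_assoc X Z Y).symm ≫ tHom (braid X Z).hom (𝟙 Y) ≫
        eqToHom (mul_assoc Z X Y) ≫ tHom (𝟙 Z) (braid X Y).hom ≫
        eqToHom (mul_assoc Z Y X).symm ≫ tHom (braid Z Y).hom (𝟙 X) := by
  rw [coilImage_hom, twist_mul, tHom_id_comp, tHom_id_comp, Category.assoc, Category.assoc,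
    braid_naturality (𝟙 X) (braid Z Y).hom, braid_mul_right X Z Y]
  simp only [Category.assoc]

lemma coilImage_mul_left_hom_comp (X Y Z : C) :
    (coilImage (X * Y) Z).hom ≫ eqToHom (mul_assoc Z X Y).symm ≫ (coilImage (Z * X) Y).hom ≫
        eqToHom (mul_assoc Y Z X).symm =
      eqToHom (mul_assoc X Y Z) ≫
        tHom (𝟙 X) (tHom (twistIso Y).hom (twistIso Z).hom) ≫ tHom (𝟙 X) (braid Y Z).hom ≫
        eqToHom (mul_assoc X Z Y).symm ≫ tHom (braid X Z).hom (𝟙 Y) ≫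
        eqToHom (mul_assoc Z X Y) ≫ tHom (𝟙 Z) (braid X Y).hom ≫
        eqToHom (mul_assoc Z Y X).symm ≫ tHom (braid Z Y).hom (𝟙 X) := by
  rw [coilImage_hom, coilImage_hom, braid_mul_left X Y Z, braid_mul_left Z X Y]
  simp only [Category.assoc, eqToHom_trans_assoc, eqToHom_refl, Category.id_comp,
    eqToHom_trans, Category.comp_id]
  -- move `θ_Y` to the front, past both braidings, and merge it with `θ_Z`
  rw [reassoc_of% tHom_whisker_exchange (braid X Z).hom (twistIso Y).hom,
    reassoc_of% eqToHom_mul_assoc_symm_comp_tHom_id_mul X Z (twistIso Y).hom,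
    ← reassoc_of% tHom_id_comp X, ← braid_naturality, reassoc_of% tHom_id_comp X,
    ← reassoc_of% eqToHom_mul_assoc_comp_tHom_id_tHom_id, ← reassoc_of% tHom_id_comp X,
    ← tHom_comp, Category.id_comp (twistIso Y).hom, Category.comp_id (twistIso Z).hom]

lemma coilImage_mul (X Y Z : C) :
    (coilImage X (Y * Z)).hom =
      eqToHom (mul_assoc X Y Z).symm ≫ (coilImage (X * Y) Z).hom ≫
        eqToHom (mul_assoc Z X Y).symm ≫ (coilImage (Z * X) Y).hom ≫
        eqToHom (mul_assoc Y Z X).symm := by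
  rw [coilImage_mul_left_hom_comp, coilImage_mul_right_hom, eqToHom_trans_assoc, eqToHom_refl,
    Category.id_comp]

def AffHom.eval : ∀ {X Y : C}, AffHom C X Y → (X ⟶ Y)
  | _, _, AffHom.of f => f
  | _, _, AffHom.coil X Y => (coilImage X Y).hom
  | _, _, AffHom.coilInv X Y => (coilImage X Y).inv
  | _, _, AffHom.comp f g => f.eval ≫ g.eval

lemma AffRel.eval_eq {X Y : C} {f g : AffHom C X Y} (h : AffRel C f g) : f.eval = g.eval := by
  induction h with
  | refl => rfl
  | symm _ ih => exact ih.symm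
  | trans _ _ ih₁ ih₂ => exact ih₁.trans ih₂
  | comp_congr _ _ ih₁ ih₂ => simp only [AffHom.eval, ih₁, ih₂]
  | of_comp => rfl
  | id_comp => exact Category.id_comp _
  | comp_id => exact Category.comp_id _
  | assoc => exact Category.assoc _ _ _
  | coil_coilInv X Y => exact (coilImage X Y).hom_inv_id
  | coilInv_coil X Y => exact (coilImage X Y).inv_hom_id
  | coil_mul X Y Z => simpa only [AffHom.eval] using coilImage_mul X Y Z
  | slide f g => exact coilImage_slide f g

def affRetraction (C : Type u) [Category.{v} C] [StrictMonoidal C] [StrictBraided C]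
    [StrictBalanced C] : Aff C ⥤ C where
  obj := ofAff
  map := Quot.lift AffHom.eval fun _ _ => AffRel.eval_eq
  map_id _ := rfl
  map_comp f g := Quot.induction_on₂ f g fun _ _ => rfl

lemma affIncl_comp_affRetraction : affIncl C ⋙ affRetraction C = 𝟭 C := rfl

instance : (affIncl C).Faithful :=
  Functor.Faithful.of_comp_eq affIncl_comp_affRetraction

end Balanced

/-- **Affinization of monoidal categories** (Mousaaid–Savage), Corollary 3.5:
if `C` is a balanced strict monoidal category, then the canonical functor `C ⥤ Aff C`
(which is the identity on objects and sends each morphism of `C` to the corresponding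
morphism of the affinization) is faithful. -/
theorem affIncl_faithful
    (C : Type u) [Category.{v} C] [StrictMonoidal C] [StrictBraided C] [StrictBalanced C] :
    ∀ {X Y : C} (f g : X ⟶ Y), (affIncl C).map f = (affIncl C).map g → f = g :=
  fun _ _ h => (affIncl C).map_injective h
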